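/- arXiv:2310.04954 — 6 statements merged into one kernel-verified Lean document; each statement's English description precedes it below -/
import Mathlib

section
/- For the HOW function, the function g(x) = x²/2 - φ(x), where φ(x) = x²/2 for |x| ≤ λ and φ(x) = (σ²/2)(1 - exp((λ² - x²)/σ²)) + λ²/2 for |x| > λ, is convex on ℝ. -/
/-!
With `m x = max (x² - λ²) 0` and `h t = exp (-t) + t - 1`, the residual equals
`(σ²/2) h (m x / σ²)`. Here `m` is convex and nonnegative, and `h` is convex and nondecreasing
on `[0, ∞)` (as `h' t = 1 - exp (-t) ≥ 0` there), so the composition is convex.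
-/

open Real Set

theorem ConvexOn.comp_of_mapsTo {𝕜 E α β : Type*} [Semiring 𝕜] [PartialOrder 𝕜]
    [AddCommMonoid E] [AddCommMonoid α] [PartialOrder α] [AddCommMonoid β] [PartialOrder β]
    [SMul 𝕜 E] [SMul 𝕜 α] [SMul 𝕜 β] {s : Set E} {t : Set β} {f : E → β} {g : β → α}
    (hg : ConvexOn 𝕜 t g) (hf : ConvexOn 𝕜 s f) (hg' : MonotoneOn g t) (hst : MapsTo f s t) :
    ConvexOn 𝕜 s (g ∘ f) :=
  ⟨hf.1, fun _ hx _ hy _ _ ha hb hab =>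
    (hg' (hst (hf.1 hx hy ha hb hab)) (hg.1 (hst hx) (hst hy) ha hb hab)
      (hf.2 hx hy ha hb hab)).trans (hg.2 (hst hx) (hst hy) ha hb hab)⟩

theorem convexOn_exp_neg_add_sub_one : ConvexOn ℝ univ (fun t : ℝ => exp (-t) + t - 1) := by
  have hexp : ConvexOn ℝ univ (fun t : ℝ => exp (-t)) :=
    convexOn_exp.comp_linearMap (-LinearMap.id)
  exact (hexp.add ((LinearMap.id : ℝ →ₗ[ℝ] ℝ).convexOn convex_univ)).sub
    (concaveOn_const 1 convex_univ)

theorem monotoneOn_exp_neg_add_sub_one : MonotoneOn (fun t : ℝ => exp (-t) + t - 1) (Ici 0) := by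
  have hderiv (t : ℝ) : HasDerivAt (fun t : ℝ => exp (-t) + t - 1) (1 - exp (-t)) t :=
    (((hasDerivAt_neg' t).exp.add (hasDerivAt_id' t)).sub_const 1).congr_deriv (by ring)
  refine monotoneOn_of_deriv_nonneg (convex_Ici 0)
    (fun t _ => (hderiv t).continuousAt.continuousWithinAt)
    (fun t _ => (hderiv t).differentiableAt.differentiableWithinAt) fun t ht => ?_
  rw [interior_Ici, mem_Ioi] at ht
  rw [(hderiv t).deriv, sub_nonneg, exp_le_one_iff, neg_nonpos]
  exact ht.le

theorem convexOn_max_sq_sub_zero (c : ℝ) : ConvexOn ℝ univ (fun x : ℝ => max (x ^ 2 - c) 0) :=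
  ((even_two.convexOn_pow).sub (concaveOn_const c convex_univ)).sup (convexOn_const 0 convex_univ)

theorem how_residual_eq {lam sigma : ℝ} (hlam : 0 ≤ lam) (hsigma : sigma ≠ 0) (x : ℝ) :
    x^2/2 - (if |x| ≤ lam then x^2/2
        else (sigma^2/2) * (1 - Real.exp ((lam^2 - x^2)/sigma^2)) + lam^2/2) =
      sigma^2/2 * (exp (-((sigma^2)⁻¹ * max (x^2 - lam^2) 0)) +
        (sigma^2)⁻¹ * max (x^2 - lam^2) 0 - 1) := by
  have habs : |x| ≤ lam ↔ x^2 - lam^2 ≤ 0 := by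
    rw [sub_nonpos, sq_le_sq, abs_of_nonneg hlam]
  split_ifs with h
  · rw [max_eq_right (habs.1 h)]
    simp
  · rw [max_eq_left (le_of_not_ge (mt habs.2 h))]
    have hexp : -((sigma^2)⁻¹ * (x^2 - lam^2)) = (lam^2 - x^2)/sigma^2 := by ring
    rw [hexp]
    field_simp
    ring

theorem how_residual_convex (lam sigma : ℝ) (hlam : 0 < lam) (hsigma : 0 < sigma) :
    ConvexOn ℝ Set.univ (fun x : ℝ =>
      x^2/2 - (if |x| ≤ lam then x^2/2
        else (sigma^2/2) * (1 - Real.exp ((lam^2 - x^2)/sigma^2)) + lam^2/2)) := by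
  have hscaled : ConvexOn ℝ univ (fun x : ℝ => (sigma^2)⁻¹ * max (x^2 - lam^2) 0) :=
    (convexOn_max_sq_sub_zero _).smul (by positivity)
  have hnonneg : MapsTo (fun x : ℝ => (sigma^2)⁻¹ * max (x^2 - lam^2) 0) univ (Ici 0) :=
    fun x _ => mem_Ici.2 (mul_nonneg (by positivity) (le_max_right _ _))
  have hconvex : ConvexOn ℝ (Ici 0) (fun t : ℝ => exp (-t) + t - 1) :=
    convexOn_exp_neg_add_sub_one.subset (subset_univ _) (convex_Ici 0)
  have hcomp := (hconvex.comp_of_mapsTo hscaled monotoneOn_exp_neg_add_sub_one hnonneg).smul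
    (c := sigma^2/2) (by positivity)
  exact hcomp.congr fun x _ => (how_residual_eq hlam.le hsigma.ne' x).symm
end

section
/- The HOW proximity operator P(x) = max{0, |x| - |x|·exp((λ² - x²)/σ²)}·sign(x) is monotonically non-decreasing on ℝ. -/
theorem how_prox_monotone (lam sigma : ℝ) (hlam : 0 < lam) (hsigma : 0 < sigma) :
    Monotone (fun x : ℝ =>
      max 0 (|x| - |x| * Real.exp ((lam^2 - x^2)/sigma^2)) * Real.sign x) := by
  set E : ℝ → ℝ := fun x => Real.exp ((lam^2 - x^2)/sigma^2) with hE
  -- key monotonicity of g(t) = max 0 (t - t * E t) on [0, ∞)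
  have key : ∀ a b : ℝ, 0 ≤ a → a ≤ b →
      max 0 (a - a * E a) ≤ max 0 (b - b * E b) := by
    intro a b ha hab
    have hEle : E b ≤ E a := by
      apply Real.exp_le_exp.mpr
      have hsq : a^2 ≤ b^2 := by nlinarith
      have : lam^2 - b^2 ≤ lam^2 - a^2 := by linarith
      exact div_le_div_of_nonneg_right this (by positivity) |>.trans_eq rfl
    apply max_le (le_max_left _ _)
    rcases le_or_gt 1 (E a) with h1 | h1
    · have : a - a * E a ≤ 0 := by nlinarith
      exact this.trans (le_max_left _ _)
    · have hb : 0 ≤ b := ha.trans hab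
      have : a - a * E a ≤ b - b * E b := by nlinarith
      exact this.trans (le_max_right _ _)
  -- for x ≥ 0, f x = max 0 (x - x*E x)
  have pos_eq : ∀ x : ℝ, 0 ≤ x →
      max 0 (|x| - |x| * E x) * Real.sign x = max 0 (x - x * E x) := by
    intro x hx
    rcases hx.eq_or_lt with h | h
    · simp [← h]
    · rw [abs_of_pos h, Real.sign_of_pos h, mul_one]
  -- for x < 0, f x = -(max 0 ((-x) - (-x)*E (-x)))
  have Eeven : ∀ x : ℝ, E (-x) = E x := by intro x; simp [hE]
  have neg_eq : ∀ x : ℝ, x < 0 →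
      max 0 (|x| - |x| * E x) * Real.sign x = -(max 0 ((-x) - (-x) * E (-x))) := by
    intro x hx
    rw [abs_of_neg hx, Real.sign_of_neg hx, Eeven, mul_neg_one]
  intro x y hxy
  dsimp only
  rcases le_or_gt 0 x with hx | hx
  · rw [pos_eq x hx, pos_eq y (hx.trans hxy)]
    exact key x y hx hxy
  · rcases le_or_gt 0 y with hy | hy
    · rw [neg_eq x hx, pos_eq y hy]
      have h1 : 0 ≤ max 0 ((-x) - (-x) * E (-x)) := le_max_left _ _
      have h2 : 0 ≤ max 0 (y - y * E y) := le_max_left _ _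
      linarith
    · rw [neg_eq x hx, neg_eq y hy]
      have := key (-y) (-x) (by linarith) (by linarith)
      linarith
end

section
/- For the HOW function with σ ≤ √2·λ, the bias Δb(x) = x − P(x) = x·exp((λ² − x²)/σ²) is strictly decreasing for x > λ; consequently, for all x > λ the bias of the HOW proximity operator is strictly less than λ, the bias of soft-thresholding. -/
/-!
The bias is `x ↦ x · exp((λ² - x²)/σ²)`, whose derivative `exp((λ² - x²)/σ²) · (1 - 2x²/σ²)`
is negative for `x > σ/√2`. Since `σ ≤ √2 λ`, the bias is therefore strictly decreasing on
`[λ, ∞)`, so for `x > λ` it lies strictly below its value `λ · exp 0 = λ` at `x = λ`.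
-/

open Real Set

theorem hasDerivAt_mul_exp_sub_sq_div (a s x : ℝ) :
    HasDerivAt (fun x => x * exp ((a - x ^ 2) / s))
      (exp ((a - x ^ 2) / s) * (1 - 2 * x ^ 2 / s)) x := by
  have hexp : HasDerivAt (fun x => exp ((a - x ^ 2) / s))
      (exp ((a - x ^ 2) / s) * (-(2 * x) / s)) x := by
    simpa using (((hasDerivAt_pow 2 x).const_sub a).div_const s).exp
  refine ((hasDerivAt_id' x).fun_mul hexp).congr_deriv ?_
  ring

theorem strictAntiOn_mul_exp_sub_sq_div (a : ℝ) {s : ℝ} (hs : 0 < s) :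
    StrictAntiOn (fun x => x * exp ((a - x ^ 2) / s)) (Ici (√(s / 2))) := by
  refine strictAntiOn_of_deriv_neg (convex_Ici _) (by fun_prop) fun x hx => ?_
  rw [interior_Ici] at hx
  have hx_pos : 0 < x := (sqrt_nonneg _).trans_lt hx
  have hsx : s < 2 * x ^ 2 := by linarith [(sqrt_lt' hx_pos).mp hx]
  rw [(hasDerivAt_mul_exp_sub_sq_div a s x).deriv]
  exact mul_neg_of_pos_of_neg (exp_pos _) (sub_neg.mpr ((one_lt_div hs).mpr hsx))

theorem how_bias_decreasing (lam sigma : ℝ) (hlam : 0 < lam) (hsigma : 0 < sigma)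
    (hle : sigma ≤ Real.sqrt 2 * lam) :
    StrictAntiOn (fun x : ℝ => x * Real.exp ((lam^2 - x^2)/sigma^2)) (Set.Ioi lam) ∧
    ∀ x : ℝ, lam < x → x * Real.exp ((lam^2 - x^2)/sigma^2) < lam := by
  have hsq : sigma ^ 2 ≤ 2 * lam ^ 2 := by
    calc sigma ^ 2 ≤ (√2 * lam) ^ 2 := pow_le_pow_left₀ hsigma.le hle 2
      _ = 2 * lam ^ 2 := by rw [mul_pow, sq_sqrt zero_le_two]
  have hthreshold : √(sigma ^ 2 / 2) ≤ lam := sqrt_le_iff.mpr ⟨hlam.le, by linarith⟩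
  have hanti : StrictAntiOn (fun x : ℝ => x * exp ((lam ^ 2 - x ^ 2) / sigma ^ 2)) (Ici lam) :=
    (strictAntiOn_mul_exp_sub_sq_div _ (by positivity)).mono (Ici_subset_Ici.mpr hthreshold)
  refine ⟨hanti.mono Ioi_subset_Ici_self, fun x hx => ?_⟩
  simpa using hanti self_mem_Ici hx.le hx
end

section
/- The hybrid ordinary-Cauchy (HOC) function g(x) = x²/2 − φ(x), where φ(x) = x²/2 for |x| ≤ λ and φ(x) = ((γ² + λ²)/2)·ln(1 + x²/γ²) + δ for |x| > λ (with δ chosen so that φ is continuous), is convex on ℝ. -/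
/-!
The residual vanishes for `|x| ≤ λ` and equals `T(x²)` for `|x| > λ`, where
`T(s) = s/2 - ((γ² + λ²)/2) log(1 + s/γ²) - δ`. The choice of `δ` makes `T(λ²) = 0`, so the
residual is `T(max(x², λ²))`. Since `T'(s) = (s - λ²)/(2(s + γ²))` is increasing, `T` is convex,
and it is monotone on `[λ², ∞)`; a convex function that is monotone on the range of the convex
function `max(x², λ²)` stays convex after composition.
-/

open Real Set

theorem convexOn_max_sq_const (c : ℝ) : ConvexOn ℝ univ fun x : ℝ => max (x^2) c :=
  even_two.convexOn_pow.sup (convexOn_const c convex_univ)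

/-- The branch `x²/2 - φ(x)` of the residual for `|x| > λ`, as a function of `s = x²`. -/
noncomputable def hocTail (lam gam s : ℝ) : ℝ :=
  s/2 - (((gam^2 + lam^2)/2) * log (1 + s/gam^2)
    + (lam^2/2 - ((gam^2 + lam^2)/2) * log (1 + lam^2/gam^2)))

section hocTail

variable {lam gam : ℝ}

theorem hocTail_sq_self : hocTail lam gam (lam^2) = 0 := by
  rw [hocTail]; ring

theorem hasDerivAt_hocTail (hgam : gam ≠ 0) {s : ℝ} (hs : s + gam^2 ≠ 0) :
    HasDerivAt (hocTail lam gam) ((s - lam^2) / (2 * (s + gam^2))) s := by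
  have hgam2 : gam^2 ≠ 0 := pow_ne_zero 2 hgam
  have harg : 1 + s/gam^2 ≠ 0 := by
    rwa [one_add_div hgam2, div_ne_zero_iff, add_comm, and_iff_left hgam2]
  have hlog : HasDerivAt (fun s => log (1 + s/gam^2)) (1/gam^2 / (1 + s/gam^2)) s :=
    (((hasDerivAt_id' s).div_const _).const_add 1).log harg
  refine (((hasDerivAt_id' s).div_const 2).sub
    ((hlog.const_mul ((gam^2 + lam^2)/2)).add_const _)).congr_deriv ?_
  rw [div_div, mul_one_add, mul_div_cancel₀ _ hgam2, add_comm (gam^2) s]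
  field_simp
  ring

theorem convexOn_hocTail (hgam : gam ≠ 0) : ConvexOn ℝ (Ioi (-gam^2)) (hocTail lam gam) := by
  have hderiv : ∀ s ∈ Ioi (-gam^2),
      HasDerivAt (hocTail lam gam) ((s - lam^2) / (2 * (s + gam^2))) s :=
    fun s (hs : -gam^2 < s) => hasDerivAt_hocTail hgam (by linarith)
  refine MonotoneOn.convexOn_of_deriv (convex_Ioi _)
    (fun s hs => (hderiv s hs).continuousAt.continuousWithinAt)
    (by rw [interior_Ioi]; exact fun s hs => (hderiv s hs).differentiableAt.differentiableWithinAt)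
    ?_
  rw [interior_Ioi]
  intro a ha b hb hab
  rw [(hderiv a ha).deriv, (hderiv b hb).deriv]
  simp only [mem_Ioi] at ha hb
  rw [div_le_div_iff₀ (by linarith) (by linarith)]
  nlinarith [sq_nonneg gam, sq_nonneg lam]

theorem monotoneOn_hocTail (hgam : gam ≠ 0) : MonotoneOn (hocTail lam gam) (Ici (lam^2)) := by
  have hderiv : ∀ s ∈ Ici (lam^2),
      HasDerivAt (hocTail lam gam) ((s - lam^2) / (2 * (s + gam^2))) s :=
    fun s (hs : lam^2 ≤ s) =>
      hasDerivAt_hocTail hgam (by nlinarith [sq_nonneg lam, sq_pos_of_ne_zero hgam])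
  refine monotoneOn_of_deriv_nonneg (convex_Ici _)
    (fun s hs => (hderiv s hs).continuousAt.continuousWithinAt)
    (fun s hs => (hderiv s (interior_subset hs)).differentiableAt.differentiableWithinAt) ?_
  intro s hs
  have hs' : lam^2 ≤ s := interior_subset (s := Ici (lam^2)) hs
  rw [(hderiv s hs').deriv]
  have : 0 ≤ s := (sq_nonneg lam).trans hs'
  exact div_nonneg (by linarith) (by positivity)

theorem hoc_residual_eq_hocTail_comp (hlam : 0 ≤ lam) :
    (fun x : ℝ => x^2/2 - (if |x| ≤ lam then x^2/2
        else ((gam^2 + lam^2)/2) * log (1 + x^2/gam^2)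
          + (lam^2/2 - ((gam^2 + lam^2)/2) * log (1 + lam^2/gam^2))))
      = hocTail lam gam ∘ fun x => max (x^2) (lam^2) := by
  funext x
  have hsq : |x| ≤ lam ↔ x^2 ≤ lam^2 := by rw [sq_le_sq, abs_of_nonneg hlam]
  split_ifs with hx
  · rw [Function.comp_apply, max_eq_right (hsq.1 hx), hocTail_sq_self, sub_self]
  · rw [Function.comp_apply, max_eq_left (not_le.1 (hsq.not.1 hx)).le, hocTail]

end hocTail

theorem hoc_residual_convex (lam gam : ℝ) (hlam : 0 < lam) (hgam : 0 < gam) :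
    ConvexOn ℝ Set.univ (fun x : ℝ =>
      x^2/2 - (if |x| ≤ lam then x^2/2
        else ((gam^2 + lam^2)/2) * Real.log (1 + x^2/gam^2)
          + (lam^2/2 - ((gam^2 + lam^2)/2) * Real.log (1 + lam^2/gam^2)))) := by
  rw [hoc_residual_eq_hocTail_comp hlam.le]
  have hsub : Ici (lam^2) ⊆ Ioi (-gam^2) := fun s (hs : lam^2 ≤ s) =>
    show -gam^2 < s by nlinarith [sq_pos_of_pos hgam, sq_nonneg lam]
  exact ((convexOn_hocTail hgam.ne').subset hsub (convex_Ici _)).comp_of_mapsTo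
    (convexOn_max_sq_const _) (monotoneOn_hocTail hgam.ne') fun _ _ => mem_Ici.2 (le_max_right _ _)
end

section
/- The HOC function φ with φ(x) = ((γ² + λ²)/2)·ln(1 + x²/γ²) + δ for |x| > λ and φ(x) = x²/2 for |x| ≤ λ, with δ = λ²/2 − ((γ² + λ²)/2)·ln(1 + λ²/γ²), is continuously differentiable on ℝ, with φ'(x) = (γ² + λ²)x/(γ² + x²) for |x| > λ. -/
/-!
On `|x| < λ` and on `|x| > λ` the function is locally one of two smooth pieces. At `x = ±λ`
both pieces take the value `λ² / 2` (this is what `δ` is chosen for) and both have derivative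
`x`, so the function is differentiable there too, and its derivative is the continuous
function gluing `x` and `(γ² + λ²) x / (γ² + x²)`.
-/

open Real

section Gluing

variable {𝕜 : Type*} [NontriviallyNormedField 𝕜] {F : Type*} [NormedAddCommGroup F]
  [NormedSpace 𝕜 F]

theorem HasDerivAt.ite_of_eq {P : 𝕜 → Prop} [DecidablePred P] {p q : 𝕜 → F} {L : F} {x : 𝕜}
    (hp : HasDerivAt p L x) (hq : HasDerivAt q L x) (hpq : p x = q x) :
    HasDerivAt (fun y => if P y then p y else q y) L x := by
  have hx : (if P x then p x else q x) = p x := by split_ifs <;> simp [hpq]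
  have hin : HasDerivWithinAt (fun y => if P y then p y else q y) L {y | P y} x :=
    hp.hasDerivWithinAt.congr (fun y hy => if_pos hy) hx
  have hout : HasDerivWithinAt (fun y => if P y then p y else q y) L {y | P y}ᶜ x :=
    hq.hasDerivWithinAt.congr (fun y hy => if_neg hy) (hx.trans hpq)
  simpa only [Set.union_compl_self, hasDerivWithinAt_univ] using hin.union hout

variable {g : 𝕜 → ℝ} {a : ℝ} {p q p' q' : 𝕜 → F}

theorem hasDerivAt_ite_le (hg : Continuous g) (hp : ∀ x, HasDerivAt p (p' x) x)
    (hq : ∀ x, HasDerivAt q (q' x) x) (hval : ∀ x, g x = a → p x = q x)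
    (hder : ∀ x, g x = a → p' x = q' x) (x : 𝕜) :
    HasDerivAt (fun y => if g y ≤ a then p y else q y) (if g x ≤ a then p' x else q' x) x := by
  rcases lt_trichotomy (g x) a with h | h | h
  · rw [if_pos h.le]
    refine (hp x).congr_of_eventuallyEq ?_
    filter_upwards [hg.continuousAt.eventually (gt_mem_nhds h)] with y hy using if_pos hy.le
  · rw [if_pos h.le]
    exact (hp x).ite_of_eq (hder x h ▸ hq x) (hval x h)
  · rw [if_neg h.not_ge]
    refine (hq x).congr_of_eventuallyEq ?_
    filter_upwards [hg.continuousAt.eventually (lt_mem_nhds h)] with y hy using if_neg hy.not_ge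

theorem contDiff_one_ite_le (hg : Continuous g) (hp : ∀ x, HasDerivAt p (p' x) x)
    (hq : ∀ x, HasDerivAt q (q' x) x) (hp' : Continuous p') (hq' : Continuous q')
    (hval : ∀ x, g x = a → p x = q x) (hder : ∀ x, g x = a → p' x = q' x) :
    ContDiff 𝕜 1 (fun y => if g y ≤ a then p y else q y) := by
  have H := hasDerivAt_ite_le hg hp hq hval hder
  refine contDiff_one_iff_deriv.mpr ⟨fun x => (H x).differentiableAt, ?_⟩
  rw [funext fun x => (H x).deriv]
  exact hp'.if_le hq' hg continuous_const hder

end Gluing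

theorem hasDerivAt_log_one_add_sq_div_sq {γ : ℝ} (hγ : γ ≠ 0) (x : ℝ) :
    HasDerivAt (fun y => log (1 + y ^ 2 / γ ^ 2)) (2 * x / (γ ^ 2 + x ^ 2)) x := by
  have hu : HasDerivAt (fun y => 1 + y ^ 2 / γ ^ 2) (2 * x / γ ^ 2) x := by
    simpa using ((hasDerivAt_pow 2 x).div_const (γ ^ 2)).const_add 1
  refine (hu.log (by positivity)).congr_deriv ?_
  field_simp

theorem hoc_contDiff_general (lam gam : ℝ) (hgam : 0 < gam) :
    ContDiff ℝ 1 (fun x : ℝ =>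
      if |x| ≤ lam then x^2/2
      else ((gam^2 + lam^2)/2) * Real.log (1 + x^2/gam^2)
        + (lam^2/2 - ((gam^2 + lam^2)/2) * Real.log (1 + lam^2/gam^2))) ∧
    ∀ x : ℝ, lam < |x| →
      deriv (fun x : ℝ =>
        if |x| ≤ lam then x^2/2
        else ((gam^2 + lam^2)/2) * Real.log (1 + x^2/gam^2)
          + (lam^2/2 - ((gam^2 + lam^2)/2) * Real.log (1 + lam^2/gam^2))) x
      = (gam^2 + lam^2) * x / (gam^2 + x^2) := by
  have hsq (x : ℝ) : HasDerivAt (fun y : ℝ => y ^ 2 / 2) x x := by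
    simpa using (hasDerivAt_pow 2 x).div_const 2
  have houter (x : ℝ) : HasDerivAt (fun y => ((gam^2 + lam^2)/2) * log (1 + y^2/gam^2)
      + (lam^2/2 - ((gam^2 + lam^2)/2) * log (1 + lam^2/gam^2)))
      ((gam^2 + lam^2) * x / (gam^2 + x^2)) x := by
    refine (((hasDerivAt_log_one_add_sq_div_sq hgam.ne' x).const_mul _).add_const _).congr_deriv ?_
    ring
  have hval (x : ℝ) (hx : |x| = lam) : x ^ 2 / 2 = ((gam^2 + lam^2)/2) * log (1 + x^2/gam^2)
      + (lam^2/2 - ((gam^2 + lam^2)/2) * log (1 + lam^2/gam^2)) := by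
    rw [← sq_abs x, hx]; ring
  have hder (x : ℝ) (hx : |x| = lam) : x = (gam^2 + lam^2) * x / (gam^2 + x^2) := by
    rw [← sq_abs x, hx, mul_div_cancel_left₀ _ (by positivity)]
  have hcont : Continuous fun x : ℝ => (gam^2 + lam^2) * x / (gam^2 + x^2) := by
    fun_prop (disch := intro x; positivity)
  refine ⟨contDiff_one_ite_le continuous_abs hsq houter continuous_id hcont hval hder,
    fun x hx => ?_⟩
  rw [(hasDerivAt_ite_le continuous_abs hsq houter hval hder x).deriv, if_neg hx.not_ge]

theorem hoc_contDiff (lam gam : ℝ) (hlam : 0 < lam) (hgam : 0 < gam) :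
    ContDiff ℝ 1 (fun x : ℝ =>
      if |x| ≤ lam then x^2/2
      else ((gam^2 + lam^2)/2) * Real.log (1 + x^2/gam^2)
        + (lam^2/2 - ((gam^2 + lam^2)/2) * Real.log (1 + lam^2/gam^2))) ∧
    ∀ x : ℝ, lam < |x| →
      deriv (fun x : ℝ =>
        if |x| ≤ lam then x^2/2
        else ((gam^2 + lam^2)/2) * Real.log (1 + x^2/gam^2)
          + (lam^2/2 - ((gam^2 + lam^2)/2) * Real.log (1 + lam^2/gam^2))) x
      = (gam^2 + lam^2) * x / (gam^2 + x^2) :=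
  hoc_contDiff_general lam gam hgam
end

section
/- The HOG bias Δb(x) = (λ² + 4τ²)²x/(x² + 4τ²)² is strictly decreasing for x > λ whenever τ ≤ (√3/2)·λ; hence for all x > λ the HOG bias is strictly less than λ. -/
theorem hog_bias_decreasing (lam tau : ℝ) (hlam : 0 < lam) (htau : 0 < tau)
    (hle : tau ≤ (Real.sqrt 3 / 2) * lam) :
    StrictAntiOn (fun x : ℝ => (lam^2 + 4*tau^2)^2 * x / (x^2 + 4*tau^2)^2) (Set.Ioi lam) ∧
    ∀ x : ℝ, lam < x → (lam^2 + 4*tau^2)^2 * x / (x^2 + 4*tau^2)^2 < lam := by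
  have hs3 : Real.sqrt 3 ^ 2 = 3 := Real.sq_sqrt (by norm_num)
  have hk3 : 4 * tau^2 ≤ 3 * lam^2 := by
    have h1 : tau^2 ≤ ((Real.sqrt 3 / 2) * lam)^2 := by
      apply sq_le_sq' <;> nlinarith [Real.sqrt_nonneg 3]
    nlinarith
  set k := 4 * tau^2 with hkdef
  have hk : 0 < k := by positivity
  have hC : 0 < (lam^2 + k)^2 := by positivity
  constructor
  · intro a ha b hb hab
    simp only [Set.mem_Ioi] at ha hb
    have ha0 : 0 < a := lt_trans hlam ha
    have hb0 : 0 < b := lt_trans hlam hb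
    have hda : 0 < (a^2 + k)^2 := by positivity
    have hdb : 0 < (b^2 + k)^2 := by positivity
    simp only
    rw [div_lt_div_iff₀ hdb hda]
    have h1 : lam^2 < a * b := by nlinarith
    have h2 : 3 * lam^2 < a^2 + a*b + b^2 := by nlinarith
    have hfac : 0 < a*b*(a^2 + a*b + b^2) + 2*k*(a*b) - k^2 := by
      nlinarith [mul_pos hk (sub_pos.2 h1), mul_lt_mul_of_pos_left h2 hk]
    have key : b * (a^2+k)^2 < a * (b^2+k)^2 := by
      nlinarith [mul_pos (sub_pos.2 hab) hfac]
    nlinarith [mul_lt_mul_of_pos_left key hC]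
  · intro x hx
    have hx0 : 0 < x := lt_trans hlam hx
    have hd : 0 < (x^2 + k)^2 := by positivity
    rw [div_lt_iff₀ hd]
    have hq : 0 < lam*x^3 + lam^2*x^2 + (lam^3 + 2*lam*k)*x - k^2 := by
      nlinarith [mul_pos hlam (mul_pos hx0 (mul_pos hx0 hx0)), mul_pos hk (sub_pos.2 hx),
        mul_lt_mul_of_pos_left hx hk, sq_nonneg (x - lam), mul_pos hlam hx0]
    nlinarith [mul_pos (sub_pos.2 hx) hq]
end
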